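/- For every λ > 0 such that F(λ) ≥ j₀, the effective dimension satisfies 𝒩(λ) ≤ F(λ)·(1 + 2(1 − 2^{1−ν*})^{−1}). In particular, under (eigup) there is a constant C depending only on ν* such that 𝒩(λ) ≤ C·F(λ) for all sufficiently small λ. -/

import Mathlib

/-!
Let `n = F(λ)`, so that `μ_{n+1} < λ`. Each of the first `n` terms of `𝒩(λ)` is at most `1`, and
each later term is at most `μ_j / λ`. Under the doubling bound `μ_{2j} ≤ q μ_j` the block of
indices `[2^k m, 2^{k+1} m)` contributes at most `m μ_m (2q)^k`, so with `m = n + 1` and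
`r = 2q = 2^{1-ν*}` the tail is at most `(n + 1) μ_{n+1} / (1 - r) ≤ 2 n λ / (1 - r)`.
-/

/-- `F μ t` is the number of indices `j ≥ 1` with `μ j ≥ t`. -/
noncomputable def F (μ : ℕ → ℝ) (t : ℝ) : ℕ :=
  {j : ℕ | 1 ≤ j ∧ t ≤ μ j}.ncard

/-- The effective dimension `𝒩(λ) = Σ_{j≥1} μ_j / (μ_j + λ)`. -/
noncomputable def Neff (μ : ℕ → ℝ) (lam : ℝ) : ℝ :=
  ∑' j : ℕ, μ (j + 1) / (μ (j + 1) + lam)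

open Filter Topology Finset

section Doubling

variable {μ : ℕ → ℝ} {q : ℝ} {j₀ m : ℕ}

lemma le_pow_mul_of_doubling (hq : 0 ≤ q)
    (hdouble : ∀ j, 1 ≤ j → j₀ ≤ j → μ (2 * j) ≤ q * μ j)
    (hm : 1 ≤ m) (hj₀m : j₀ ≤ m) (k : ℕ) : μ (2 ^ k * m) ≤ q ^ k * μ m := by
  induction k with
  | zero => simp
  | succ k ih =>
    have hk : m ≤ 2 ^ k * m := Nat.le_mul_of_pos_left m (by positivity)
    calc μ (2 ^ (k + 1) * m) = μ (2 * (2 ^ k * m)) := by rw [pow_succ', mul_assoc]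
      _ ≤ q * μ (2 ^ k * m) := hdouble _ (hm.trans hk) (hj₀m.trans hk)
      _ ≤ q * (q ^ k * μ m) := mul_le_mul_of_nonneg_left ih hq
      _ = q ^ (k + 1) * μ m := by ring

lemma sum_Ico_two_pow_mul_le (hanti : AntitoneOn μ (Set.Ici 1)) (hq : 0 ≤ q)
    (hdouble : ∀ j, 1 ≤ j → j₀ ≤ j → μ (2 * j) ≤ q * μ j)
    (hm : 1 ≤ m) (hj₀m : j₀ ≤ m) (k : ℕ) :
    ∑ i ∈ Ico (2 ^ k * m) (2 ^ (k + 1) * m), μ i ≤ m * μ m * (2 * q) ^ k := by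
  have hstart : 1 ≤ 2 ^ k * m := hm.trans (Nat.le_mul_of_pos_left m (by positivity))
  have hcard : 2 ^ (k + 1) * m - 2 ^ k * m = 2 ^ k * m := by
    have : 2 ^ (k + 1) * m = 2 ^ k * m + 2 ^ k * m := by ring
    omega
  calc ∑ i ∈ Ico (2 ^ k * m) (2 ^ (k + 1) * m), μ i
      ≤ ∑ _i ∈ Ico (2 ^ k * m) (2 ^ (k + 1) * m), q ^ k * μ m :=
        sum_le_sum fun i hi =>
          (hanti hstart (hstart.trans (mem_Ico.1 hi).1) (mem_Ico.1 hi).1).trans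
            (le_pow_mul_of_doubling hq hdouble hm hj₀m k)
    _ = m * μ m * (2 * q) ^ k := by
        rw [sum_const, Nat.card_Ico, hcard, nsmul_eq_mul]
        push_cast
        ring

lemma sum_Ico_le_of_doubling (hanti : AntitoneOn μ (Set.Ici 1))
    (hnonneg : ∀ j, 1 ≤ j → 0 ≤ μ j) (hq : 0 ≤ q) (hq1 : 2 * q < 1)
    (hdouble : ∀ j, 1 ≤ j → j₀ ≤ j → μ (2 * j) ≤ q * μ j)
    (hm : 1 ≤ m) (hj₀m : j₀ ≤ m) (N : ℕ) :
    ∑ i ∈ Ico m N, μ i ≤ m * μ m / (1 - 2 * q) := by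
  have hdyadic : ∀ K, ∑ i ∈ Ico m (2 ^ K * m), μ i ≤ m * μ m * ∑ k ∈ range K, (2 * q) ^ k := by
    intro K
    induction K with
    | zero => simp
    | succ K ih =>
      rw [← sum_Ico_consecutive _ (Nat.le_mul_of_pos_left m (by positivity))
        (Nat.mul_le_mul_right m (Nat.pow_le_pow_right two_pos K.le_succ)), sum_range_succ, mul_add]
      exact add_le_add ih (sum_Ico_two_pow_mul_le hanti hq hdouble hm hj₀m K)
  have hgeom : ∑ k ∈ range N, (2 * q) ^ k ≤ 1 / (1 - 2 * q) := by
    simpa [← range_eq_Ico] using geom_sum_Ico_le_of_lt_one (m := 0) (n := N) (by positivity) hq1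
  have hN : N ≤ 2 ^ N * m := Nat.lt_two_pow_self.le.trans (Nat.le_mul_of_pos_right _ hm)
  calc ∑ i ∈ Ico m N, μ i ≤ ∑ i ∈ Ico m (2 ^ N * m), μ i :=
        sum_le_sum_of_subset_of_nonneg (Ico_subset_Ico_right hN) fun i hi _ =>
          hnonneg i (hm.trans (mem_Ico.1 hi).1)
    _ ≤ m * μ m * ∑ k ∈ range N, (2 * q) ^ k := hdyadic N
    _ ≤ m * μ m * (1 / (1 - 2 * q)) := by
        gcongr
        exact mul_nonneg m.cast_nonneg (hnonneg m hm)
    _ = m * μ m / (1 - 2 * q) := mul_one_div _ _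

end Doubling

section Counting

variable {μ : ℕ → ℝ} {t : ℝ}

lemma finite_setOf_le_of_tendsto_zero (hlim : Tendsto μ atTop (𝓝 0)) (ht : 0 < t) :
    {j : ℕ | 1 ≤ j ∧ t ≤ μ j}.Finite := by
  obtain ⟨N, hN⟩ := eventually_atTop.1 (hlim.eventually (eventually_lt_nhds ht))
  exact (Set.finite_Iio N).subset fun j hj => not_le.1 fun hNj => (hN j hNj).not_ge hj.2

lemma le_F_of_le (hanti : AntitoneOn μ (Set.Ici 1)) (hlim : Tendsto μ atTop (𝓝 0)) (ht : 0 < t)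
    {m : ℕ} (hm : 1 ≤ m) (htm : t ≤ μ m) : m ≤ F μ t := by
  have hsub : (Icc 1 m : Set ℕ) ⊆ {j | 1 ≤ j ∧ t ≤ μ j} := fun j hj => by
    rw [coe_Icc, Set.mem_Icc] at hj
    exact ⟨hj.1, htm.trans (hanti hj.1 hm hj.2)⟩
  simpa [F] using Set.ncard_le_ncard hsub (finite_setOf_le_of_tendsto_zero hlim ht)

lemma apply_F_add_one_lt (hanti : AntitoneOn μ (Set.Ici 1)) (hlim : Tendsto μ atTop (𝓝 0))
    (ht : 0 < t) : μ (F μ t + 1) < t :=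
  not_le.1 fun h => (le_F_of_le hanti hlim ht (Nat.le_add_left 1 _) h).not_gt (Nat.lt_succ_self _)

end Counting

lemma sum_range_le_add_of_tail {g : ℕ → ℝ} {n : ℕ} {T : ℝ} (hg0 : ∀ j, 0 ≤ g j)
    (hg1 : ∀ j, g j ≤ 1) (htail : ∀ N, ∑ j ∈ Ico n N, g j ≤ T) (N : ℕ) :
    ∑ j ∈ range N, g j ≤ n + T :=
  calc ∑ j ∈ range N, g j ≤ ∑ j ∈ range (max N n), g j :=
        sum_le_sum_of_subset_of_nonneg (range_subset_range.2 (le_max_left N n))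
          fun j _ _ => hg0 j
    _ = ∑ j ∈ range n, g j + ∑ j ∈ Ico n (max N n), g j :=
        (sum_range_add_sum_Ico g (le_max_right N n)).symm
    _ ≤ ∑ _j ∈ range n, (1 : ℝ) + T := add_le_add (sum_le_sum fun j _ => hg1 j) (htail _)
    _ = n + T := by simp

lemma Neff_le_add_div_of_tail {μ : ℕ → ℝ} (hnonneg : ∀ j, 1 ≤ j → 0 ≤ μ j) {lam : ℝ}
    (hlam : 0 < lam) {n : ℕ} {T : ℝ} (htail : ∀ N, ∑ i ∈ Ico (n + 1) N, μ i ≤ T) :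
    Neff μ lam ≤ n + T / lam := by
  have hμ : ∀ j, 0 ≤ μ (j + 1) := fun j => hnonneg _ (Nat.le_add_left 1 j)
  refine Real.tsum_le_of_sum_range_le (fun j => div_nonneg (hμ j) (by linarith [hμ j]))
    (sum_range_le_add_of_tail (fun j => div_nonneg (hμ j) (by linarith [hμ j]))
      (fun j => div_le_one_of_le₀ (by linarith) (by linarith [hμ j])) fun N => ?_)
  calc ∑ j ∈ Ico n N, μ (j + 1) / (μ (j + 1) + lam) ≤ ∑ j ∈ Ico n N, μ (j + 1) / lam :=
        sum_le_sum fun j _ => div_le_div_of_nonneg_left (hμ j) hlam (by linarith [hμ j])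
    _ = (∑ i ∈ Ico (n + 1) (N + 1), μ i) / lam := by rw [← sum_div, sum_Ico_add']
    _ ≤ T / lam := by gcongr; exact htail _

theorem Neff_le_F_mul {μ : ℕ → ℝ} {q : ℝ} {j₀ : ℕ} (hnonneg : ∀ j, 1 ≤ j → 0 ≤ μ j)
    (hanti : AntitoneOn μ (Set.Ici 1)) (hlim : Tendsto μ atTop (𝓝 0)) (hq : 0 ≤ q)
    (hq1 : 2 * q < 1) (hdouble : ∀ j, 1 ≤ j → j₀ ≤ j → μ (2 * j) ≤ q * μ j) (hj₀ : 1 ≤ j₀)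
    {lam : ℝ} (hlam : 0 < lam) (hF : j₀ ≤ F μ lam) :
    Neff μ lam ≤ F μ lam * (1 + 2 * (1 - 2 * q)⁻¹) := by
  set n := F μ lam
  have hn : (1 : ℝ) ≤ n := by exact_mod_cast hj₀.trans hF
  have hc : 0 < (1 - 2 * q)⁻¹ := inv_pos.2 (by linarith)
  have hμn : μ (n + 1) ≤ lam := (apply_F_add_one_lt hanti hlim hlam).le
  have htail := sum_Ico_le_of_doubling hanti hnonneg hq hq1 hdouble (Nat.le_add_left 1 n)
    (hF.trans n.le_succ)
  calc Neff μ lam ≤ n + (n + 1 : ℕ) * μ (n + 1) / (1 - 2 * q) / lam :=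
        Neff_le_add_div_of_tail hnonneg hlam htail
    _ ≤ n + (n + 1) * (1 - 2 * q)⁻¹ := by
        rw [add_le_add_iff_left, div_le_iff₀ hlam, div_eq_mul_inv, mul_right_comm]
        push_cast
        gcongr
    _ ≤ n * (1 + 2 * (1 - 2 * q)⁻¹) := by nlinarith

/-- under (eigup) with `ν* > 1`, for every `λ > 0` with `F(λ) ≥ j₀`
one has `𝒩(λ) ≤ F(λ)(1 + 2(1 - 2^(1-ν*))⁻¹)`; in particular there is a constant
`C` (depending only on `ν*`) with `𝒩(λ) ≤ C F(λ)` for all sufficiently small `λ`. -/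
theorem stmt8 (μ : ℕ → ℝ)
    (hpos : ∀ j, 1 ≤ j → 0 < μ j)
    (hanti : ∀ j, 1 ≤ j → μ (j + 1) ≤ μ j)
    (hlim : Filter.Tendsto μ Filter.atTop (nhds 0))
    (ν : ℝ) (hν : 1 < ν) (j₀ : ℕ) (hj₀ : 1 ≤ j₀)
    (heigup : ∀ j, 1 ≤ j → j₀ ≤ j → μ (2 * j) ≤ (2 : ℝ) ^ (-ν) * μ j) :
    (∀ lam : ℝ, 0 < lam → j₀ ≤ F μ lam →
      Neff μ lam ≤ (F μ lam : ℝ) * (1 + 2 * (1 - (2 : ℝ) ^ (1 - ν))⁻¹)) ∧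
    ∃ C : ℝ, 0 < C ∧ ∃ lam₀ : ℝ, 0 < lam₀ ∧
      ∀ lam : ℝ, 0 < lam → lam ≤ lam₀ → Neff μ lam ≤ C * (F μ lam : ℝ) := by
  have hanti' : AntitoneOn μ (Set.Ici 1) := antitoneOn_nat_Ici_of_succ_le hanti
  have hnonneg : ∀ j, 1 ≤ j → 0 ≤ μ j := fun j hj => (hpos j hj).le
  have hr : (2 : ℝ) ^ (1 - ν) = 2 * 2 ^ (-ν) := by
    rw [sub_eq_add_neg, Real.rpow_add two_pos, Real.rpow_one]
  have hr1 : 2 * (2 : ℝ) ^ (-ν) < 1 :=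
    hr ▸ Real.rpow_lt_one_of_one_lt_of_neg one_lt_two (by linarith)
  have hbound : ∀ lam : ℝ, 0 < lam → j₀ ≤ F μ lam →
      Neff μ lam ≤ (F μ lam : ℝ) * (1 + 2 * (1 - (2 : ℝ) ^ (1 - ν))⁻¹) := fun lam hlam hF =>
    hr ▸ Neff_le_F_mul hnonneg hanti' hlim (by positivity) hr1 heigup hj₀ hlam hF
  have hC : 0 < 1 + 2 * (1 - (2 : ℝ) ^ (1 - ν))⁻¹ := by
    have : 0 < 1 - (2 : ℝ) ^ (1 - ν) := by linarith
    positivity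
  refine ⟨hbound, _, hC, μ j₀, hpos j₀ hj₀, fun lam hlam hle => ?_⟩
  rw [mul_comm]
  exact hbound lam hlam (le_F_of_le hanti' hlim hlam hj₀ hle)
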